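/- arXiv:2403.17019 — 5 statements merged into one kernel-verified Lean document; each statement's English description precedes it below -/
import Mathlib

section
/- For quaternionic polynomials f, g and a point q with f(q) ≠ 0, the evaluation of the *-product satisfies (f*g)(q) = f(q) · g(f(q)⁻¹ q f(q)); and if f(q) = 0 then (f*g)(q) = 0. -/
/-- Evaluation of a quaternionic polynomial `Σ qⁿ aₙ` (right coefficients) at `q`. -/
noncomputable def qeval (f : Polynomial (Quaternion ℝ)) (q : Quaternion ℝ) : Quaternion ℝ :=
  f.sum fun n a => q ^ n * a

lemma qeval_add (f g : Polynomial (Quaternion ℝ)) (q : Quaternion ℝ) :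
    qeval (f + g) q = qeval f q + qeval g q := by
  unfold qeval
  apply Polynomial.sum_add_index <;> intros <;> simp [mul_add]

lemma qeval_monomial (n : ℕ) (a : Quaternion ℝ) (q : Quaternion ℝ) :
    qeval (Polynomial.monomial n a) q = q ^ n * a := by
  unfold qeval
  rw [Polynomial.sum_monomial_index _ _ (by simp)]

lemma qeval_key (f g : Polynomial (Quaternion ℝ)) (q : Quaternion ℝ) :
    qeval (f * g) q = g.sum fun k b => q ^ k * qeval f q * b := by
  induction g using Polynomial.induction_on' with
  | add p r hp hr =>
      rw [mul_add, qeval_add, hp, hr, Polynomial.sum_add_index] <;> intros <;> simp [mul_add]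
  | monomial k b =>
      rw [Polynomial.sum_monomial_index _ _ (by simp)]
      induction f using Polynomial.induction_on' with
      | add p r hp hr => rw [add_mul, qeval_add, hp, hr, qeval_add, mul_add, add_mul]
      | monomial m a =>
          rw [Polynomial.monomial_mul_monomial, qeval_monomial, qeval_monomial,
            pow_add, pow_mul_comm, mul_assoc, mul_assoc, mul_assoc]

lemma conj_pow_aux (s q : Quaternion ℝ) (hs : s ≠ 0) (k : ℕ) :
    (s⁻¹ * q * s) ^ k = s⁻¹ * q ^ k * s := by
  induction k with
  | zero => simp [inv_mul_cancel₀ hs]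
  | succ k ih =>
      rw [pow_succ, ih, pow_succ]
      simp [mul_assoc, mul_inv_cancel_left₀ hs]

theorem starProduct_eval (f g : Polynomial (Quaternion ℝ)) (q : Quaternion ℝ) :
    (qeval f q ≠ 0 →
      qeval (f * g) q = qeval f q * qeval g ((qeval f q)⁻¹ * q * qeval f q)) ∧
    (qeval f q = 0 → qeval (f * g) q = 0) := by
  constructor
  · intro hs
    have h2 : qeval g ((qeval f q)⁻¹ * q * qeval f q)
        = g.sum fun k b => ((qeval f q)⁻¹ * q * qeval f q) ^ k * b := rfl
    rw [qeval_key, h2, Polynomial.sum, Polynomial.sum, Finset.mul_sum]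
    refine Finset.sum_congr rfl fun k _ => ?_
    rw [conj_pow_aux _ _ hs k]
    simp [mul_assoc, mul_inv_cancel_left₀ hs]
  · intro hs
    rw [qeval_key]
    simp [Polynomial.sum, hs]
end

section
/- For quaternionic polynomials f, g in one variable, the symmetrization is multiplicative: (f*g)^s = f^s * g^s. -/
/-!
Coefficientwise conjugation is an anti-involution of `ℍ[X]`: `(f * g)^c = g^c * f^c`. Hence
`(f^s)^c = f^s`, so `f^s` has real coefficients and is central, and
`(f g)^s = f (g g^c) f^c = f g^s f^c = f f^c g^s`.
-/

open Polynomial Finset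

/-- The regular conjugate `f^c`, with all coefficients quaternion-conjugated. -/
noncomputable def qconj (f : Polynomial (Quaternion ℝ)) : Polynomial (Quaternion ℝ) :=
  ∑ n ∈ f.support, Polynomial.monomial n (star (f.coeff n))

/-- The symmetrization `f^s = f * f^c`. -/
noncomputable def qsym (f : Polynomial (Quaternion ℝ)) : Polynomial (Quaternion ℝ) :=
  f * qconj f

theorem Polynomial.commute_of_forall_coeff_commute {R : Type*} [Semiring R] {p q : R[X]}
    (h : ∀ m n, Commute (p.coeff m) (q.coeff n)) : Commute p q := by
  ext n : 1
  rw [coeff_mul, coeff_mul, ← Nat.sum_antidiagonal_swap]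
  exact sum_congr rfl fun x _ => (h x.2 x.1).eq

theorem Quaternion.commute_of_star_eq_self {R : Type*} [CommRing R] [NoZeroDivisors R] [CharZero R]
    {a : Quaternion R} (h : star a = a) (b : Quaternion R) : Commute a b := by
  rw [Quaternion.star_eq_self.mp h]
  exact Quaternion.coe_commute _ _

theorem coeff_qconj (f : Polynomial (Quaternion ℝ)) (n : ℕ) :
    (qconj f).coeff n = star (f.coeff n) := by
  simp only [qconj, finsetSum_coeff, coeff_monomial, sum_ite_eq']
  split_ifs with h
  · rfl
  · rw [notMem_support_iff.mp h, star_zero]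

theorem qconj_qconj (f : Polynomial (Quaternion ℝ)) : qconj (qconj f) = f := by
  ext n : 1
  rw [coeff_qconj, coeff_qconj, star_star]

theorem qconj_mul (f g : Polynomial (Quaternion ℝ)) :
    qconj (f * g) = qconj g * qconj f := by
  ext n : 1
  rw [coeff_qconj, coeff_mul, coeff_mul, star_sum, ← Nat.sum_antidiagonal_swap]
  exact sum_congr rfl fun x _ => by simp only [Prod.fst_swap, Prod.snd_swap, coeff_qconj, star_mul]

theorem qconj_qsym (f : Polynomial (Quaternion ℝ)) : qconj (qsym f) = qsym f := by
  rw [qsym, qconj_mul, qconj_qconj]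

theorem qsym_commute (f p : Polynomial (Quaternion ℝ)) : Commute (qsym f) p :=
  commute_of_forall_coeff_commute fun m _ =>
    Quaternion.commute_of_star_eq_self (by rw [← coeff_qconj, qconj_qsym]) _

theorem symmetrization_multiplicative (f g : Polynomial (Quaternion ℝ)) :
    qsym (f * g) = qsym f * qsym g :=
  calc qsym (f * g) = f * (qsym g * qconj f) := by
        rw [qsym, qconj_mul, qsym]; simp only [mul_assoc]
    _ = f * (qconj f * qsym g) := by rw [(qsym_commute g _).eq]
    _ = qsym f * qsym g := (mul_assoc _ _ _).symm
end

section
/- A two-variable quaternionic slice regular polynomial P vanishes at every point (a, q₂) with q₂ commuting with a if and only if P = (q₁ - a) * P₁ for some P₁ ∈ ℍ[q₁,q₂]; here evaluation of P at (q₁,q₂) with q₁q₂ = q₂q₁ means Σ q₁ⁿ q₂^m a_{n,m}. -/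
/-!
Since `q₂` commutes with `a`, `P(a, q₂) = Σₘ q₂ᵐ (Σₙ aⁿ a_{n,m})` is the left evaluation at `q₂`
of the one-variable polynomial `P(a, ·)`, the left evaluation of `P` at the constant `a`. This
polynomial already vanishes on the real axis only if it is zero (compose with the real linear
functionals on `ℍ`), and, because `X` commutes with constants, the remainder theorem for left
evaluation holds over any ring: `P(a, ·) = 0` iff `q₁ - a` is a left factor of `P`.
-/

/-- Two-variable quaternionic polynomials `Σ q₁ⁿ q₂ᵐ a_{n,m}`, encoded as polynomials in `q₁`
whose coefficients are polynomials in `q₂`; polynomial multiplication is exactly the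
double-convolution `*`-product. -/
abbrev Poly2 : Type := Polynomial (Polynomial (Quaternion ℝ))

/-- Evaluation of `P = Σ q₁ⁿ q₂ᵐ a_{n,m}` at a point `(a,b)`:  `Σ aⁿ bᵐ a_{n,m}`. -/
noncomputable def evalPair (P : Poly2) (a b : Quaternion ℝ) : Quaternion ℝ :=
  P.sum fun n p => a ^ n * qeval p b

/-- Regular conjugate `P^c` of a two-variable quaternionic polynomial. -/
noncomputable def conj2 (P : Poly2) : Poly2 :=
  ∑ n ∈ P.support, Polynomial.monomial n (qconj (P.coeff n))

/-- Symmetrization `P^s = P * P^c` of a two-variable quaternionic polynomial. -/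
noncomputable def sym2 (P : Poly2) : Poly2 := P * conj2 P

open Polynomial

namespace Polynomial

section Ring

variable {R : Type*} [Ring R]

/-- `Σ cⁿ aₙ`; `Polynomial.eval` puts the coefficients on the other side, `Σ aₙ cⁿ`. -/
noncomputable def leftEval (c : R) : R[X] →+ R where
  toFun p := p.sum fun n a => c ^ n * a
  map_zero' := sum_zero_index _
  map_add' _ _ := sum_add_index _ _ _ (fun _ => mul_zero _) fun _ _ _ => mul_add _ _ _

theorem leftEval_apply (c : R) (p : R[X]) : leftEval c p = p.sum fun n a => c ^ n * a := rfl

theorem leftEval_monomial (c : R) (n : ℕ) (a : R) : leftEval c (monomial n a) = c ^ n * a :=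
  sum_monomial_index _ _ (mul_zero _)

theorem leftEval_C_mul {c x : R} (h : Commute x c) (p : R[X]) :
    leftEval c (C x * p) = x * leftEval c p := by
  induction p using Polynomial.induction_on' with
  | add p q hp hq => rw [mul_add, map_add, map_add, hp, hq, mul_add]
  | monomial n a =>
    rw [C_mul_monomial, leftEval_monomial, leftEval_monomial, ← mul_assoc, ← mul_assoc,
      (h.pow_right n).eq]

theorem leftEval_X_mul (c : R) (p : R[X]) : leftEval c (X * p) = c * leftEval c p := by
  induction p using Polynomial.induction_on' with
  | add p q hp hq => rw [mul_add, map_add, map_add, hp, hq, mul_add]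
  | monomial n a =>
    rw [X_mul_monomial, leftEval_monomial, leftEval_monomial, pow_succ', mul_assoc]

theorem leftEval_X_sub_C_mul (c : R) (p : R[X]) : leftEval c ((X - C c) * p) = 0 := by
  rw [sub_mul, map_sub, leftEval_X_mul, leftEval_C_mul (Commute.refl c), sub_self]

theorem exists_eq_X_sub_C_mul_add_C_leftEval (c : R) (p : R[X]) :
    ∃ q, p = (X - C c) * q + C (leftEval c p) := by
  induction p using Polynomial.induction_on' with
  | add p q hp hq =>
    obtain ⟨qp, hqp⟩ := hp
    obtain ⟨qq, hqq⟩ := hq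
    refine ⟨qp + qq, ?_⟩
    conv_lhs => rw [hqp, hqq]
    rw [map_add, map_add, mul_add]
    abel
  | monomial n a =>
    have hpow : (X : R[X]) ^ n = (X - C c) * ∑ i ∈ Finset.range n, X ^ i * C c ^ (n - 1 - i)
        + C (c ^ n) := by
      rw [(commute_X (C c)).mul_geom_sum₂, C_pow, sub_add_cancel]
    refine ⟨(∑ i ∈ Finset.range n, X ^ i * C c ^ (n - 1 - i)) * C a, ?_⟩
    rw [leftEval_monomial, ← C_mul_X_pow_eq_monomial, ← X_pow_mul, hpow, add_mul, mul_assoc,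
      ← C_mul]

theorem leftEval_eq_zero_iff (c : R) (p : R[X]) :
    leftEval c p = 0 ↔ ∃ q, p = (X - C c) * q := by
  constructor
  · intro h
    obtain ⟨q, hq⟩ := exists_eq_X_sub_C_mul_add_C_leftEval c p
    exact ⟨q, by rw [hq, h, C_0, add_zero]⟩
  · rintro ⟨q, rfl⟩
    exact leftEval_X_sub_C_mul c q

theorem leftEval_leftEval_C {b c : R} (h : Commute c b) (P : R[X][X]) :
    leftEval b (leftEval (C c) P) = P.sum fun n p => c ^ n * leftEval b p := by
  induction P using Polynomial.induction_on' with
  | add P Q hP hQ =>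
    rw [map_add, map_add, hP, hQ, sum_add_index _ _ _ (by simp) (by simp [mul_add])]
  | monomial n p =>
    rw [leftEval_monomial, sum_monomial_index _ _ (by simp), ← C_pow,
      leftEval_C_mul (h.pow_left n)]

end Ring

theorem eq_zero_of_forall_leftEval_algebraMap_eq_zero {K A : Type*} [Field K] [Infinite K]
    [Ring A] [Algebra K A] {r : A[X]} (h : ∀ t : K, leftEval (algebraMap K A t) r = 0) :
    r = 0 := by
  ext n
  rw [coeff_zero, ← Module.forall_dual_apply_eq_zero_iff K]
  intro ℓ
  -- the image of `r` under `ℓ`, coefficientwise, is a polynomial over `K` vanishing on `K`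
  let p : K[X] := ∑ m ∈ r.support, monomial m (ℓ (r.coeff m))
  have hp_eval (t : K) : p.eval t = ℓ (leftEval (algebraMap K A t) r) := by
    simp only [p, eval_finsetSum, eval_monomial, leftEval_apply, sum_def, map_sum]
    refine Finset.sum_congr rfl fun m _ => ?_
    rw [← map_pow, ← Algebra.smul_def, map_smul, smul_eq_mul, mul_comm]
  have hp : p = 0 := Polynomial.funext fun t => by rw [hp_eval, h, map_zero, eval_zero]
  obtain hn | hn := eq_or_ne (r.coeff n) 0
  · rw [hn, map_zero]
  · simpa [p, finsetSum_coeff, coeff_monomial, hn] using congr_arg (coeff · n) hp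

end Polynomial

theorem evalPair_eq_leftEval_leftEval_C (P : Poly2) {a b : Quaternion ℝ} (h : Commute a b) :
    evalPair P a b = leftEval b (leftEval (C a) P) :=
  (leftEval_leftEval_C h P).symm

theorem vanishing_on_a_times_Ca_iff_left_factor (P : Poly2) (a : Quaternion ℝ) :
    (∀ q₂ : Quaternion ℝ, q₂ * a = a * q₂ → evalPair P a q₂ = 0) ↔
    ∃ P₁ : Poly2, P = (Polynomial.X - Polynomial.C (Polynomial.C a)) * P₁ := by
  rw [← leftEval_eq_zero_iff]
  constructor
  · -- real values of `q₂` already commute with `a`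
    intro h
    refine eq_zero_of_forall_leftEval_algebraMap_eq_zero (K := ℝ) fun t => ?_
    rw [← evalPair_eq_leftEval_leftEval_C P (Algebra.commutes t a).symm]
    exact h _ (Algebra.commutes t a)
  · intro h q₂ hq₂
    rw [evalPair_eq_leftEval_leftEval_C P hq₂.symm, h, map_zero]
end

section
/- For n×n matrices A, B over a division ring F, the Dieudonné determinant is multiplicative: Det(A·B) = Det(A) · Det(B) in the abelianization of F×. -/
/-!
Elementary row operations commute with right multiplication, and `Det` changes under them by a
factor that does not depend on the matrix: it is unchanged by adding a multiple of one row to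
another and multiplied by `[λ]` when a row is scaled by `λ`. So if `A` row-reduces to `N`, the
identity `Det (N * C) = Det N * Det C` transfers back to `A`. Gaussian elimination, column by
column, reduces every invertible matrix over a division ring to `1`, where the identity holds
because `Det 1 = [1] = 1`. If `A` is singular then so is `A * B`, since matrix rings over a
division ring are Dedekind-finite, and both sides vanish.
-/

open scoped Classical

/-- The class of `x ∈ F` in the abelianization of `Fˣ`, with `0` adjoined. -/
noncomputable def cls {F : Type} [DivisionRing F] (x : F) : WithZero (Abelianization Fˣ) :=
  if h : x = 0 then 0 else (Abelianization.of (Units.mk0 x h) : Abelianization Fˣ)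

lemma cls_one {F : Type} [DivisionRing F] : cls (1 : F) = 1 := by
  rw [cls, dif_neg one_ne_zero, Units.mk0_one, map_one, WithZero.coe_one]

lemma cls_ne_zero {F : Type} [DivisionRing F] {x : F} (hx : x ≠ 0) : cls x ≠ 0 := by
  rw [cls, dif_neg hx]
  exact WithZero.coe_ne_zero

namespace Matrix

section Semiring

variable {R : Type*} [Semiring R] {ι κ : Type*} [DecidableEq ι]

inductive ElementaryRowOp : Matrix ι κ R → Matrix ι κ R → Prop
  | add_smul_row (A : Matrix ι κ R) {i j : ι} (hij : i ≠ j) (l : R) :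
      ElementaryRowOp A (A.updateRow i (A i + l • A j))
  | smul_row (A : Matrix ι κ R) (i : ι) {l : R} (hl : l ≠ 0) :
      ElementaryRowOp A (A.updateRow i (l • A i))

abbrev RowReduces : Matrix ι κ R → Matrix ι κ R → Prop :=
  Relation.ReflTransGen ElementaryRowOp

theorem updateRow_add_smul_mul [Fintype κ] {κ' : Type*} (A : Matrix ι κ R) (C : Matrix κ κ' R)
    (i j : ι) (l : R) :
    A.updateRow i (A i + l • A j) * C = (A * C).updateRow i ((A * C) i + l • (A * C) j) := by
  rw [updateRow_mul, add_vecMul, smul_vecMul]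
  rfl

theorem updateRow_smul_mul [Fintype κ] {κ' : Type*} (A : Matrix ι κ R) (C : Matrix κ κ' R)
    (i : ι) (l : R) : A.updateRow i (l • A i) * C = (A * C).updateRow i (l • (A * C) i) := by
  rw [updateRow_mul, smul_vecMul]
  rfl

theorem ElementaryRowOp.map_mul_of_map_mul [Fintype ι] {M : Type*} [MonoidWithZero M]
    [IsLeftCancelMulZero M]
    {D : Matrix ι ι R → M} {χ : R → M} (hχ : ∀ l, l ≠ 0 → χ l ≠ 0)
    (hadd : ∀ (A : Matrix ι ι R) (i j : ι), i ≠ j → ∀ l : R,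
      D (A.updateRow i (A i + l • A j)) = D A)
    (hsmul : ∀ (A : Matrix ι ι R) (i : ι) (l : R), D (A.updateRow i (l • A i)) = χ l * D A)
    {A B : Matrix ι ι R} (h : ElementaryRowOp A B) (C : Matrix ι ι R)
    (hB : D (B * C) = D B * D C) : D (A * C) = D A * D C := by
  cases h with
  | @add_smul_row i j hij l =>
    rwa [updateRow_add_smul_mul, hadd _ i j hij, hadd _ i j hij] at hB
  | @smul_row i l hl =>
    rw [updateRow_smul_mul, hsmul, hsmul, mul_assoc] at hB
    exact mul_left_cancel₀ (hχ l hl) hB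

theorem RowReduces.map_mul_of_map_mul [Fintype ι] {M : Type*} [MonoidWithZero M]
    [IsLeftCancelMulZero M]
    {D : Matrix ι ι R → M} {χ : R → M} (hχ : ∀ l, l ≠ 0 → χ l ≠ 0)
    (hadd : ∀ (A : Matrix ι ι R) (i j : ι), i ≠ j → ∀ l : R,
      D (A.updateRow i (A i + l • A j)) = D A)
    (hsmul : ∀ (A : Matrix ι ι R) (i : ι) (l : R), D (A.updateRow i (l • A i)) = χ l * D A)
    {A N : Matrix ι ι R} (h : RowReduces A N) (C : Matrix ι ι R)
    (hN : D (N * C) = D N * D C) : D (A * C) = D A * D C := by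
  induction h using Relation.ReflTransGen.head_induction_on with
  | refl => exact hN
  | head hstep _ ih => exact hstep.map_mul_of_map_mul hχ hadd hsmul C ih

theorem rowReduces_add_smul_row_to_others [Finite ι] (N : Matrix ι κ R) (k : ι) (l : ι → R) :
    RowReduces N (fun i ↦ if i = k then N k else N i + l i • N k) := by
  have := Fintype.ofFinite ι
  let cleared (s : Finset ι) : Matrix ι κ R :=
    fun i ↦ if i ∈ s ∧ i ≠ k then N i + l i • N k else N i
  have reduces_cleared (s : Finset ι) : RowReduces N (cleared s) := by
    induction s using Finset.induction_on with
    | empty => simpa [cleared] using Relation.ReflTransGen.refl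
    | insert a s ha ih =>
      by_cases hak : a = k
      · have : cleared (insert a s) = cleared s := by
          subst hak
          funext i
          by_cases hia : i = a <;> simp [cleared, hia]
        rwa [this]
      · have : cleared (insert a s) =
            (cleared s).updateRow a (cleared s a + l a • cleared s k) := by
          funext i
          by_cases hia : i = a
          · subst hia
            rw [updateRow_self]
            simp [cleared, ha, hak]
          · rw [updateRow_ne hia]
            simp [cleared, hia]
        rw [this]
        exact ih.tail (.add_smul_row _ hak (l a))
  have : cleared Finset.univ = fun i ↦ if i = k then N k else N i + l i • N k := by
    funext i
    by_cases hik : i = k <;> simp [cleared, hik]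
  rw [← this]
  exact reduces_cleared _

end Semiring

section DivisionRing

variable {F : Type*} [DivisionRing F] {ι κ : Type*} [DecidableEq ι]

def HasIdentityCols (s : Finset ι) (N : Matrix ι ι F) : Prop :=
  ∀ j ∈ s, ∀ i, N i j = (1 : Matrix ι ι F) i j

theorem ElementaryRowOp.mulVec_eq_zero [Fintype κ] {A B : Matrix ι κ F}
    (h : ElementaryRowOp A B) {v : κ → F} (hv : B *ᵥ v = 0) : A *ᵥ v = 0 := by
  cases h with
  | @add_smul_row i j hij l =>
    rw [updateRow_mulVec, add_dotProduct, smul_dotProduct] at hv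
    have hj : A j ⬝ᵥ v = 0 := by simpa [hij.symm, mulVec] using congrFun hv j
    have hi : A i ⬝ᵥ v = 0 := by simpa [hj] using congrFun hv i
    funext k
    by_cases hki : k = i
    · exact hki ▸ hi
    · simpa [hki] using congrFun hv k
  | smul_row i hl =>
    rw [updateRow_mulVec, smul_dotProduct] at hv
    have hi : A i ⬝ᵥ v = 0 := by simpa [hl] using congrFun hv i
    funext k
    by_cases hki : k = i
    · exact hki ▸ hi
    · simpa [hki] using congrFun hv k

theorem RowReduces.mulVec_eq_zero [Fintype κ] {A B : Matrix ι κ F}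
    (h : RowReduces A B) {v : κ → F} (hv : B *ᵥ v = 0) : A *ᵥ v = 0 := by
  induction h with
  | refl => exact hv
  | tail _ hstep ih => exact ih (hstep.mulVec_eq_zero hv)

theorem HasIdentityCols.exists_pivot [Fintype ι] {s : Finset ι} {N : Matrix ι ι F}
    (hs : HasIdentityCols s N) (hN : ∀ v, N *ᵥ v = 0 → v = 0) {c : ι} (hc : c ∉ s) :
    ∃ r ∉ s, N r c ≠ 0 := by
  by_contra! h
  -- Otherwise column `c` equals `∑ j ∈ s, N j c • e_j`, so `v - e_c` lies in the kernel.
  let v : ι → F := fun j ↦ if j ∈ s then N j c else 0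
  have hv : N *ᵥ (v - Pi.single c 1) = 0 := by
    funext i
    rw [mulVec_sub, mulVec_single_one]
    simp only [v, mulVec, dotProduct, mul_ite, mul_zero, Finset.sum_ite_mem, Finset.univ_inter,
      Pi.sub_apply, Pi.zero_apply, col_apply]
    rw [Finset.sum_congr rfl fun j hj ↦ by rw [hs j hj i], sub_eq_zero]
    by_cases hi : i ∈ s <;> simp [one_apply, hi, h]
  have := congrFun (hN _ hv) c
  simp [v, hc] at this

theorem HasIdentityCols.exists_rowReduces_pivot_eq_one {s : Finset ι} {N : Matrix ι ι F}
    (hs : HasIdentityCols s N) {c r : ι} (hc : c ∉ s) (hr : r ∉ s) (hrc : N r c ≠ 0) :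
    ∃ N', RowReduces N N' ∧ N' c c = 1 ∧ HasIdentityCols s N' := by
  obtain ⟨N₁, hNN₁, hN₁cc, hs₁⟩ :
      ∃ N₁, RowReduces N N₁ ∧ N₁ c c ≠ 0 ∧ HasIdentityCols s N₁ := by
    by_cases hcc : N c c = 0
    · have hcr : c ≠ r := by rintro rfl; exact hrc hcc
      refine ⟨N.updateRow c (N c + (1 : F) • N r), .single (.add_smul_row N hcr 1),
        by simpa [hcc] using hrc, fun j hj i ↦ ?_⟩
      by_cases hic : i = c
      · have hcj : c ≠ j := (ne_of_mem_of_not_mem hj hc).symm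
        have hrj : r ≠ j := (ne_of_mem_of_not_mem hj hr).symm
        rw [hic, updateRow_self]
        simp [hs j hj, hcj, hrj]
      · rw [updateRow_ne hic, hs j hj i]
    · exact ⟨N, .refl, hcc, hs⟩
  refine ⟨N₁.updateRow c ((N₁ c c)⁻¹ • N₁ c),
    hNN₁.tail (.smul_row N₁ c (inv_ne_zero hN₁cc)), by simp [hN₁cc], fun j hj i ↦ ?_⟩
  by_cases hic : i = c
  · have hcj : c ≠ j := (ne_of_mem_of_not_mem hj hc).symm
    rw [hic, updateRow_self]
    simp [hs₁ j hj, hcj]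
  · rw [updateRow_ne hic, hs₁ j hj i]

theorem HasIdentityCols.exists_rowReduces_insert [Finite ι] {s : Finset ι} {N : Matrix ι ι F}
    (hs : HasIdentityCols s N) {c : ι} (hc : c ∉ s) (hcc : N c c = 1) :
    ∃ N', RowReduces N N' ∧ HasIdentityCols (insert c s) N' := by
  refine ⟨_, rowReduces_add_smul_row_to_others N c (fun i ↦ -N i c), fun j hj i ↦ ?_⟩
  rcases Finset.mem_insert.1 hj with rfl | hjs
  · by_cases hic : i = j <;> simp [hic, hcc, one_apply]
  · have hcj : c ≠ j := (ne_of_mem_of_not_mem hjs hc).symm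
    by_cases hic : i = c
    · subst hic
      simp [hs j hjs]
    · simp [hic, hs j hjs, one_apply, hcj]

theorem rowReduces_one_of_isUnit [Fintype ι] {M : Matrix ι ι F} (hM : IsUnit M) :
    RowReduces M 1 := by
  suffices ∀ s : Finset ι, ∃ N, RowReduces M N ∧ HasIdentityCols s N by
    obtain ⟨N, hMN, hN⟩ := this Finset.univ
    rwa [show N = 1 from ext fun i j ↦ hN j (Finset.mem_univ j) i] at hMN
  intro s
  induction s using Finset.induction_on with
  | empty => exact ⟨M, .refl, by simp [HasIdentityCols]⟩
  | insert c s hc ih =>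
    obtain ⟨N, hMN, hs⟩ := ih
    have hN (v : ι → F) (hv : N *ᵥ v = 0) : v = 0 :=
      mulVec_injective_of_isUnit hM ((hMN.mulVec_eq_zero hv).trans (mulVec_zero M).symm)
    obtain ⟨r, hr, hrc⟩ := hs.exists_pivot hN hc
    obtain ⟨N', hNN', hcc, hs'⟩ := hs.exists_rowReduces_pivot_eq_one hc hr hrc
    obtain ⟨N'', hN'N'', hs''⟩ := hs'.exists_rowReduces_insert hc hcc
    exact ⟨N'', (hMN.trans hNN').trans hN'N'', hs''⟩

end DivisionRing

end Matrix

theorem dieudonne_det_multiplicative {F : Type} [DivisionRing F] (n : ℕ)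
    (Det : Matrix (Fin n) (Fin n) F → WithZero (Abelianization Fˣ))
    (hsing : ∀ A, Det A = 0 ↔ ¬ IsUnit A)
    (hdiag : ∀ d : Fin n → F, Det (Matrix.diagonal d) = cls ((List.ofFn d).prod))
    (hrowadd : ∀ (A : Matrix (Fin n) (Fin n) F) (i j : Fin n), i ≠ j → ∀ l : F,
      Det (A.updateRow i (A i + l • A j)) = Det A)
    (hrowsmul : ∀ (A : Matrix (Fin n) (Fin n) F) (i : Fin n) (l : F),
      Det (A.updateRow i (l • A i)) = cls l * Det A) :
    ∀ A B : Matrix (Fin n) (Fin n) F, Det (A * B) = Det A * Det B := by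
  have hDet_one : Det 1 = 1 := by
    rw [← Matrix.diagonal_one, hdiag]
    simp [cls_one]
  intro A B
  by_cases hA : IsUnit A
  · refine Matrix.RowReduces.map_mul_of_map_mul (fun _ ↦ cls_ne_zero) hrowadd hrowsmul
      (Matrix.rowReduces_one_of_isUnit hA) B ?_
    rw [one_mul, hDet_one, one_mul]
  · have hAB : ¬ IsUnit (A * B) := fun h ↦ hA (isUnit_of_mul_isUnit_left h)
    rw [(hsing _).2 hA, (hsing _).2 hAB, zero_mul]
end

section
/- Let A be an n×n matrix over a division ring F and b ∈ Fⁿ. The linear system A x = b has a unique solution (up to commutators) if and only if the Dieudonné determinant of A is nonzero, and in that case the class of the j-th component of the solution equals Det(A)⁻¹ · Det(A with j-th column replaced by b) in the abelianization of F×. -/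
open scoped Classical

section cls

variable {F : Type} [DivisionRing F]

theorem cls_zero : cls (0 : F) = 0 := dif_pos rfl

theorem cls_mul (x y : F) : cls (x * y) = cls x * cls y := by
  rcases eq_or_ne x 0 with rfl | hx
  · simp [cls]
  rcases eq_or_ne y 0 with rfl | hy
  · simp [cls]
  simp [cls, hx, hy, Units.mk0_mul]

variable (F) in
noncomputable def clsHom : F →*₀ WithZero (Abelianization Fˣ) where
  toFun := cls
  map_zero' := cls_zero
  map_one' := by simp [cls]
  map_mul' := cls_mul

@[simp]
theorem clsHom_apply (x : F) : clsHom F x = cls x := rfl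

theorem cls_prod_ofFn {n : ℕ} (d : Fin n → F) : cls (List.ofFn d).prod = ∏ i, cls (d i) := by
  simpa [List.map_ofFn, List.prod_ofFn] using map_list_prod (clsHom F) (List.ofFn d)

end cls

namespace Matrix

def IsDiagOnCols {ι R : Type*} [Zero R] (s : Finset ι) (M : Matrix ι ι R) : Prop :=
  ∀ j ∈ s, ∀ i, i ≠ j → M i j = 0

section Ring

variable {ι R : Type*} [DecidableEq ι] [Ring R]

theorem IsDiagOnCols.updateRow_add_smul {s : Finset ι} {M : Matrix ι ι R} (hM : IsDiagOnCols s M)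
    {k p : ι} (hk : k ∉ s) (hp : p ∉ s) (c : R) :
    IsDiagOnCols s (M.updateRow k (M k + c • M p)) := by
  intro j hj i hij
  have hkj : k ≠ j := fun h => hk (h ▸ hj)
  have hpj : p ≠ j := fun h => hp (h ▸ hj)
  rcases eq_or_ne i k with rfl | hik
  · simp [hM j hj i hkj, hM j hj p hpj]
  · simp [hik, hM j hj i hij]

variable [Fintype ι]

theorem not_isUnit_of_row_eq_zero [Nontrivial R] {M : Matrix ι ι R} {i : ι} (h : M i = 0) :
    ¬IsUnit M := by
  rintro ⟨u, rfl⟩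
  simpa [mul_apply, h] using congr_fun₂ u.mul_inv i i

theorem mulVec_injective_mul {T M : Matrix ι ι R} (hT : IsUnit T)
    (hM : Function.Injective M.mulVec) : Function.Injective (T * M).mulVec := by
  intro v w h
  rw [← mulVec_mulVec, ← mulVec_mulVec] at h
  exact hM (mulVec_injective_of_isUnit hT h)

variable (ι R) in
def transvectionSubmonoid : Submonoid (Matrix ι ι R) :=
  Submonoid.closure {T | ∃ i j, i ≠ j ∧ ∃ c, T = 1 + single i j c}

theorem one_add_single_mul (i j : ι) (c : R) (M : Matrix ι ι R) :
    (1 + single i j c) * M = M.updateRow i (M i + c • M j) := by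
  ext a b
  rcases eq_or_ne a i with rfl | ha
  · simp [add_mul]
  · simp [add_mul, ha]

theorem isUnit_of_mem_transvectionSubmonoid {T : Matrix ι ι R}
    (hT : T ∈ transvectionSubmonoid ι R) : IsUnit T := by
  refine (Submonoid.closure_le (S := IsUnit.submonoid _)).mpr ?_ hT
  rintro _ ⟨i, j, hij, c, rfl⟩
  have hmul : ∀ c c' : R, (1 + single i j c) * (1 + single i j c') = 1 + single i j (c + c') :=
    fun c c' => by
      rw [add_mul, one_mul, mul_add, mul_one, single_mul_single_of_ne _ _ _ _ hij.symm, add_zero,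
        single_add]
      abel
  exact ⟨⟨_, 1 + single i j (-c), by rw [hmul, add_neg_cancel, single_zero, add_zero],
    by rw [hmul, neg_add_cancel, single_zero, add_zero]⟩, rfl⟩

theorem apply_mul_of_mem_transvectionSubmonoid {α : Type*} {f : Matrix ι ι R → α}
    (hf : ∀ (A : Matrix ι ι R) (i j : ι), i ≠ j → ∀ c : R,
      f (A.updateRow i (A i + c • A j)) = f A)
    {T : Matrix ι ι R} (hT : T ∈ transvectionSubmonoid ι R) (M : Matrix ι ι R) :
    f (T * M) = f M := by
  induction hT using Submonoid.closure_induction generalizing M with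
  | mem T hT =>
    obtain ⟨i, j, hij, c, rfl⟩ := hT
    rw [one_add_single_mul, hf M i j hij]
  | one => rw [one_mul]
  | mul T T' _ _ hT hT' => rw [mul_assoc, hT, hT']

theorem exists_mem_transvectionSubmonoid_mul_eq (M : Matrix ι ι R) (k : ι) (c : ι → R)
    (s : Finset ι) (hks : k ∉ s) :
    ∃ T ∈ transvectionSubmonoid ι R,
      T * M = of fun i => if i ∈ s then M i + c i • M k else M i := by
  induction s using Finset.induction_on with
  | empty => exact ⟨1, one_mem _, by ext; simp⟩
  | @insert a s has ih =>
    have hks' : k ∉ s := fun h => hks (Finset.mem_insert_of_mem h)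
    obtain ⟨T, hT, hTM⟩ := ih hks'
    have hak : a ≠ k := fun h => hks (h ▸ Finset.mem_insert_self a s)
    refine ⟨(1 + single a k (c a)) * T,
      mul_mem (Submonoid.subset_closure ⟨a, k, hak, c a, rfl⟩) hT, ?_⟩
    rw [mul_assoc, hTM, one_add_single_mul]
    ext i l
    rcases eq_or_ne i a with rfl | hia
    · simp [has, hks']
    · simp [hia]

end Ring

section DivisionRing

variable {ι F : Type*} [DecidableEq ι] [DivisionRing F]

def clearCol (M : Matrix ι ι F) (k : ι) : Matrix ι ι F :=
  of fun i => if i = k then M k else M i - (M i k * (M k k)⁻¹) • M k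

theorem IsDiagOnCols.clearCol_insert {s : Finset ι} {M : Matrix ι ι F} {k : ι}
    (hM : IsDiagOnCols s M) (hk : k ∉ s) (hkk : M k k ≠ 0) :
    IsDiagOnCols (insert k s) (clearCol M k) := by
  intro j hj i hij
  rcases eq_or_ne i k with rfl | hik
  · have hjs : j ∈ s := (Finset.mem_insert.mp hj).resolve_left (Ne.symm hij)
    simp [clearCol, hM j hjs i hij]
  rcases Finset.mem_insert.mp hj with rfl | hjs
  · simp [clearCol, hik, inv_mul_cancel_right₀ hkk]
  · have hkj : k ≠ j := fun h => hk (h ▸ hjs)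
    simp [clearCol, hik, hM j hjs i hij, hM j hjs k hkj]

variable [Fintype ι]

theorem exists_mem_transvectionSubmonoid_mul_eq_clearCol (M : Matrix ι ι F) (k : ι) :
    ∃ T ∈ transvectionSubmonoid ι F, T * M = clearCol M k := by
  obtain ⟨T, hT, hTM⟩ := exists_mem_transvectionSubmonoid_mul_eq M k
    (fun i => -(M i k * (M k k)⁻¹)) (Finset.univ.erase k) (Finset.notMem_erase k _)
  refine ⟨T, hT, hTM.trans ?_⟩
  ext i l
  rcases eq_or_ne i k with rfl | hik
  · simp [clearCol]
  · simp [clearCol, hik, sub_eq_add_neg]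

namespace IsDiagOnCols

variable {s : Finset ι} {M : Matrix ι ι F} {k : ι}

theorem diag_ne_zero (hM : IsDiagOnCols s M) (hinj : Function.Injective M.mulVec) {j : ι}
    (hj : j ∈ s) : M j j ≠ 0 := by
  intro hjj
  have hcol : M *ᵥ Pi.single j 1 = M *ᵥ 0 := by
    ext i
    rcases eq_or_ne i j with rfl | hij
    · simp [hjj]
    · simp [hM j hj i hij]
  simpa using congr_fun (hinj hcol) j

/-- Otherwise column `k` would be a combination of the columns in `s`. -/
theorem exists_pivot (hM : IsDiagOnCols s M) (hinj : Function.Injective M.mulVec)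
    (hk : k ∉ s) : ∃ p ∉ s, M p k ≠ 0 := by
  by_contra! hzero
  set v : ι → F := Pi.single k 1 - ∑ j ∈ s, Pi.single j ((M j j)⁻¹ * M j k) with hv
  have hker : M *ᵥ v = M *ᵥ 0 := by
    ext r
    rw [hv, mulVec_sub, mulVec_sum, Pi.sub_apply, Finset.sum_apply]
    by_cases hr : r ∈ s
    · rw [Finset.sum_eq_single_of_mem r hr]
      · simp [mul_inv_cancel_left₀ (hM.diag_ne_zero hinj hr)]
      · intro j hj hjr
        simp [hM j hj r (Ne.symm hjr)]
    · rw [Finset.sum_eq_zero]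
      · simp [hzero r hr]
      · intro j hj
        simp [hM j hj r (fun h => hr (h ▸ hj))]
  have := congr_fun (hinj hker) k
  simp [hv, Finset.sum_apply, Pi.single_apply, hk] at this

theorem exists_mem_transvectionSubmonoid_mul_pivot (hM : IsDiagOnCols s M) (hk : k ∉ s)
    {p : ι} (hp : p ∉ s) (hpk : M p k ≠ 0) :
    ∃ T ∈ transvectionSubmonoid ι F, IsDiagOnCols s (T * M) ∧ (T * M) k k ≠ 0 := by
  by_cases hkk : M k k = 0
  · have hkp : k ≠ p := fun h => hpk (h ▸ hkk)
    refine ⟨1 + single k p 1, Submonoid.subset_closure ⟨k, p, hkp, 1, rfl⟩, ?_⟩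
    rw [one_add_single_mul]
    exact ⟨hM.updateRow_add_smul hk hp 1, by simpa [hkk] using hpk⟩
  · exact ⟨1, one_mem _, by simpa using hM, by simpa using hkk⟩

theorem exists_mem_transvectionSubmonoid_mul_insert (hM : IsDiagOnCols s M)
    (hinj : Function.Injective M.mulVec) (hk : k ∉ s) :
    ∃ T ∈ transvectionSubmonoid ι F, IsDiagOnCols (insert k s) (T * M) := by
  obtain ⟨p, hp, hpk⟩ := hM.exists_pivot hinj hk
  obtain ⟨T, hT, hTM, hkk⟩ := hM.exists_mem_transvectionSubmonoid_mul_pivot hk hp hpk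
  obtain ⟨T', hT', hT'TM⟩ := exists_mem_transvectionSubmonoid_mul_eq_clearCol (T * M) k
  refine ⟨T' * T, mul_mem hT' hT, ?_⟩
  rw [mul_assoc, hT'TM]
  exact hTM.clearCol_insert hk hkk

end IsDiagOnCols

theorem exists_mem_transvectionSubmonoid_mul_eq_diagonal {M : Matrix ι ι F}
    (hM : Function.Injective M.mulVec) :
    ∃ T ∈ transvectionSubmonoid ι F, ∃ d, T * M = diagonal d := by
  suffices ∀ s : Finset ι, ∃ T ∈ transvectionSubmonoid ι F, IsDiagOnCols s (T * M) by
    obtain ⟨T, hT, hTM⟩ := this Finset.univ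
    exact ⟨T, hT, _, (IsDiag.diagonal_diag fun i j hij => hTM j (Finset.mem_univ j) i hij).symm⟩
  intro s
  induction s using Finset.induction_on with
  | empty => exact ⟨1, one_mem _, fun j hj => absurd hj (Finset.notMem_empty j)⟩
  | @insert k s hk ih =>
    obtain ⟨T, hT, hTM⟩ := ih
    obtain ⟨T', hT', hT'TM⟩ := hTM.exists_mem_transvectionSubmonoid_mul_insert
      (mulVec_injective_mul (isUnit_of_mem_transvectionSubmonoid hT) hM) hk
    exact ⟨T' * T, mul_mem hT' hT, by rwa [mul_assoc]⟩

theorem isUnit_of_mulVec_injective {M : Matrix ι ι F} (hM : Function.Injective M.mulVec) :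
    IsUnit M := by
  obtain ⟨T, hT, d, hTM⟩ := exists_mem_transvectionSubmonoid_mul_eq_diagonal hM
  have hTunit := isUnit_of_mem_transvectionSubmonoid hT
  have hd : ∀ i, d i ≠ 0 := by
    intro i hi
    have hinj := mulVec_injective_mul hTunit hM
    rw [hTM] at hinj
    have : diagonal d *ᵥ Pi.single i 1 = diagonal d *ᵥ 0 := by simp [hi]
    simpa using congr_fun (hinj this) i
  have hdiag : IsUnit (diagonal d) :=
    (Pi.isUnit_iff.mpr fun i => (hd i).isUnit).map (diagonalRingHom ι F)
  rw [← hTM] at hdiag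
  exact (hTunit.unit.isUnit_units_mul M).mp hdiag

theorem existsUnique_mulVec_eq_iff_isUnit {A : Matrix ι ι F} (b : ι → F) :
    (∃! x, A *ᵥ x = b) ↔ IsUnit A := by
  constructor
  · rintro ⟨x₀, hx₀, huniq⟩
    refine isUnit_of_mulVec_injective fun y z hyz => ?_
    have hsol : A *ᵥ (x₀ + (y - z)) = b := by
      rw [mulVec_add, mulVec_sub, hyz, sub_self, add_zero, hx₀]
    simpa [sub_eq_zero] using huniq _ hsol
  · intro hA
    refine Function.Bijective.existsUnique ⟨mulVec_injective_of_isUnit hA, fun b => ?_⟩ b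
    exact ⟨(↑hA.unit⁻¹ : Matrix ι ι F) *ᵥ b, by simp [mulVec_mulVec]⟩

end DivisionRing

end Matrix

open Matrix

structure IsDieudonneDet {F : Type} [DivisionRing F] {n : ℕ}
    (Det : Matrix (Fin n) (Fin n) F → WithZero (Abelianization Fˣ)) : Prop where
  eq_zero_iff : ∀ A, Det A = 0 ↔ ¬IsUnit A
  diagonal_eq : ∀ d : Fin n → F, Det (diagonal d) = cls (List.ofFn d).prod
  updateRow_add_smul : ∀ (A : Matrix (Fin n) (Fin n) F) (i j : Fin n), i ≠ j → ∀ c : F,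
    Det (A.updateRow i (A i + c • A j)) = Det A

namespace IsDieudonneDet

variable {F : Type} [DivisionRing F] {n : ℕ}
  {Det : Matrix (Fin n) (Fin n) F → WithZero (Abelianization Fˣ)}

theorem apply_mul_of_mem (hDet : IsDieudonneDet Det) {T : Matrix (Fin n) (Fin n) F}
    (hT : T ∈ transvectionSubmonoid (Fin n) F) (M : Matrix (Fin n) (Fin n) F) :
    Det (T * M) = Det M :=
  apply_mul_of_mem_transvectionSubmonoid hDet.updateRow_add_smul hT M

/-- If `M j j = 0` the row `j` vanishes; otherwise clearing column `j` leaves the diagonal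
unchanged. -/
theorem eq_prod_diag (hDet : IsDieudonneDet Det) {M : Matrix (Fin n) (Fin n) F} {j : Fin n}
    (hM : IsDiagOnCols (Finset.univ.erase j) M) : Det M = ∏ i, cls (M i i) := by
  have hrow : ∀ l, l ≠ j → M j l = 0 := fun l hl =>
    hM l (Finset.mem_erase.mpr ⟨hl, Finset.mem_univ l⟩) j hl.symm
  by_cases hjj : M j j = 0
  · have hzero : M j = 0 := funext fun l => (eq_or_ne l j).elim (· ▸ hjj) (hrow l)
    rw [(hDet.eq_zero_iff M).mpr (not_isUnit_of_row_eq_zero hzero),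
      Finset.prod_eq_zero (Finset.mem_univ j) (by rw [hjj, cls_zero])]
  obtain ⟨T, hT, hTM⟩ := exists_mem_transvectionSubmonoid_mul_eq_clearCol M j
  have hcleared := hM.clearCol_insert (Finset.notMem_erase j _) hjj
  rw [Finset.insert_erase (Finset.mem_univ j)] at hcleared
  have hdiag : (clearCol M j).IsDiag := fun i l hil => hcleared l (Finset.mem_univ l) i hil
  have hclear : ∀ i, clearCol M j i i = M i i := fun i => by
    rcases eq_or_ne i j with rfl | hij
    · simp [clearCol]
    · simp [clearCol, hij, hrow i hij]
  rw [← hDet.apply_mul_of_mem hT, hTM, ← hdiag.diagonal_diag, hDet.diagonal_eq, cls_prod_ofFn]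
  simp [hclear]

theorem mul_updateCol_one (hDet : IsDieudonneDet Det) {A : Matrix (Fin n) (Fin n) F}
    (hA : IsUnit A) (j : Fin n) (x : Fin n → F) :
    Det (A * (1 : Matrix (Fin n) (Fin n) F).updateCol j x) = Det A * cls (x j) := by
  obtain ⟨T, hT, d, hTA⟩ :=
    exists_mem_transvectionSubmonoid_mul_eq_diagonal (mulVec_injective_of_isUnit hA)
  set M := diagonal d * (1 : Matrix (Fin n) (Fin n) F).updateCol j x
  have hM : IsDiagOnCols (Finset.univ.erase j) M := fun l hl i hil => by
    simp [M, diagonal_mul, (Finset.mem_erase.mp hl).1, one_apply_ne hil]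
  have hdiagM : ∀ i, cls (M i i) = cls (d i) * (if i = j then cls (x j) else 1) := fun i => by
    rcases eq_or_ne i j with rfl | hij
    · simp [M, diagonal_mul, cls_mul]
    · simp [M, diagonal_mul, hij]
  calc Det (A * (1 : Matrix (Fin n) (Fin n) F).updateCol j x)
      = Det M := by rw [← hDet.apply_mul_of_mem hT, ← mul_assoc, hTA]
    _ = ∏ i, cls (M i i) := hDet.eq_prod_diag hM
    _ = Det A * cls (x j) := by
      rw [← hDet.apply_mul_of_mem hT A, hTA, hDet.diagonal_eq, cls_prod_ofFn]
      simp only [hdiagM, Finset.prod_mul_distrib, Finset.prod_ite_eq', Finset.mem_univ, if_true]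

end IsDieudonneDet

theorem dieudonne_cramer_general {F : Type} [DivisionRing F] (n : ℕ)
    (Det : Matrix (Fin n) (Fin n) F → WithZero (Abelianization Fˣ))
    (hsing : ∀ A, Det A = 0 ↔ ¬ IsUnit A)
    (hdiag : ∀ d : Fin n → F, Det (Matrix.diagonal d) = cls ((List.ofFn d).prod))
    (hrowadd : ∀ (A : Matrix (Fin n) (Fin n) F) (i j : Fin n), i ≠ j → ∀ l : F,
      Det (A.updateRow i (A i + l • A j)) = Det A)
    (A : Matrix (Fin n) (Fin n) F) (b : Fin n → F) :
    ((∃! x : Fin n → F, A.mulVec x = b) ↔ Det A ≠ 0) ∧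
    (Det A ≠ 0 → ∀ x : Fin n → F, A.mulVec x = b →
      ∀ j : Fin n, cls (x j) = (Det A)⁻¹ * Det (A.updateCol j b)) := by
  have hDet : IsDieudonneDet Det := ⟨hsing, hdiag, hrowadd⟩
  have hunit : Det A ≠ 0 ↔ IsUnit A := by rw [Ne, hsing A, not_not]
  refine ⟨(existsUnique_mulVec_eq_iff_isUnit b).trans hunit.symm, fun hA x hx j => ?_⟩
  have hcol : A.updateCol j b = A * (1 : Matrix (Fin n) (Fin n) F).updateCol j x := by
    rw [mul_updateCol, mul_one, hx]
  rw [hcol, hDet.mul_updateCol_one (hunit.mp hA), inv_mul_cancel_left₀ hA]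

theorem dieudonne_cramer {F : Type} [DivisionRing F] (n : ℕ)
    (Det : Matrix (Fin n) (Fin n) F → WithZero (Abelianization Fˣ))
    (hsing : ∀ A, Det A = 0 ↔ ¬ IsUnit A)
    (hdiag : ∀ d : Fin n → F, Det (Matrix.diagonal d) = cls ((List.ofFn d).prod))
    (hrowadd : ∀ (A : Matrix (Fin n) (Fin n) F) (i j : Fin n), i ≠ j → ∀ l : F,
      Det (A.updateRow i (A i + l • A j)) = Det A)
    (hrowsmul : ∀ (A : Matrix (Fin n) (Fin n) F) (i : Fin n) (l : F),
      Det (A.updateRow i (l • A i)) = cls l * Det A)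
    (A : Matrix (Fin n) (Fin n) F) (b : Fin n → F) :
    ((∃! x : Fin n → F, A.mulVec x = b) ↔ Det A ≠ 0) ∧
    (Det A ≠ 0 → ∀ x : Fin n → F, A.mulVec x = b →
      ∀ j : Fin n, cls (x j) = (Det A)⁻¹ * Det (A.updateCol j b)) :=
  dieudonne_cramer_general n Det hsing hdiag hrowadd A b
end
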